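/- arXiv:2401.06339 — 3 statements merged into one kernel-verified Lean document; each statement's English description precedes it below -/
import Mathlib

section
/- A boundary steady state with x₁ > 0 and x₂ = 0 of the system S' = D(S_in−S) − f₁(S,x₂)x₁ − f₂(S,x₁)x₂, x₁' = (f₁(S,x₂)−D₁)x₁, x₂' = (f₂(S,x₁)−D₂)x₂ exists if and only if the break-even concentration λ₁(D) (the unique S with f₁(S,0)=D₁) exists and satisfies S_in > λ₁(D); in that case the steady state is unique and equals (λ₁(D), D(S_in−λ₁(D))/D₁, 0). -/
/-!
On the face `x₂ = 0` the equation for `x₁` with `x₁ > 0` forces `f₁(S, 0) = D₁`, which by strict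
monotonicity pins `S` to the break-even concentration `λ₁`. The substrate equation then reads
`D (S_in − λ₁) = D₁ x₁`, so `x₁` is determined, and it is positive exactly when `S_in > λ₁`.
-/

lemma eq_of_sub_mul_eq_zero {a b x : ℝ} (hx : 0 < x) (h : (a - b) * x = 0) : a = b :=
  sub_eq_zero.mp ((mul_eq_zero.mp h).resolve_right hx.ne')

lemma eq_div_of_substrate_balance {D D₁ Sin S x : ℝ} (hD₁ : 0 < D₁)
    (h : D * (Sin - S) - D₁ * x = 0) : x = D * (Sin - S) / D₁ := by
  rw [eq_div_iff hD₁.ne']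
  linarith

lemma lt_of_substrate_balance {D D₁ Sin S x : ℝ} (hD : 0 < D) (hD₁ : 0 < D₁) (hx : 0 < x)
    (h : D * (Sin - S) - D₁ * x = 0) : S < Sin := by
  have : 0 < D * (Sin - S) := by nlinarith
  exact sub_pos.mp (pos_of_mul_pos_right this hD.le)

theorem stmt6_general (D D₁ D₂ Sin : ℝ)
    (hD : 0 < D) (hD₁ : 0 < D₁)
    (f₁ f₂ : ℝ → ℝ → ℝ)
    (hmono : StrictMono (fun S => f₁ S 0)) :
    ((∃ S x₁ : ℝ, 0 ≤ S ∧ 0 < x₁ ∧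
        D * (Sin - S) - f₁ S 0 * x₁ - f₂ S x₁ * 0 = 0 ∧
        (f₁ S 0 - D₁) * x₁ = 0 ∧ (f₂ S x₁ - D₂) * 0 = 0) ↔
      (∃ lam : ℝ, 0 ≤ lam ∧ f₁ lam 0 = D₁ ∧ Sin > lam)) ∧
    (∀ S x₁ lam : ℝ, 0 ≤ S → 0 < x₁ →
      D * (Sin - S) - f₁ S 0 * x₁ - f₂ S x₁ * 0 = 0 →
      (f₁ S 0 - D₁) * x₁ = 0 → (f₂ S x₁ - D₂) * 0 = 0 →
      0 ≤ lam → f₁ lam 0 = D₁ →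
      S = lam ∧ x₁ = D * (Sin - lam) / D₁) := by
  refine ⟨⟨?_, ?_⟩, ?_⟩
  · rintro ⟨S, x₁, hS, hx₁, hsubstrate, hbiomass, -⟩
    have hbreak := eq_of_sub_mul_eq_zero hx₁ hbiomass
    rw [hbreak, mul_zero, sub_zero] at hsubstrate
    exact ⟨S, hS, hbreak, lt_of_substrate_balance hD hD₁ hx₁ hsubstrate⟩
  · rintro ⟨lam, hlam, hbreak, hlt⟩
    have hx₁ : 0 < D * (Sin - lam) / D₁ := div_pos (mul_pos hD (sub_pos.mpr hlt)) hD₁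
    refine ⟨lam, _, hlam, hx₁, ?_, by rw [hbreak, sub_self, zero_mul], mul_zero _⟩
    rw [hbreak, mul_div_cancel₀ _ hD₁.ne']
    ring
  · intro S x₁ lam _ hx₁ hsubstrate hbiomass _ _ hbreak_lam
    have hbreak := eq_of_sub_mul_eq_zero hx₁ hbiomass
    have hS : S = lam := hmono.injective (hbreak.trans hbreak_lam.symm)
    rw [hbreak, mul_zero, sub_zero, hS] at hsubstrate
    exact ⟨hS, eq_div_of_substrate_balance hD₁ hsubstrate⟩

/-- A boundary steady state with `x₁ > 0`, `x₂ = 0` exists iff the break-even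
concentration `λ₁(D)` exists and `S_in > λ₁(D)`; in that case it is unique and equals
`(λ₁(D), D(S_in−λ₁(D))/D₁, 0)`. -/
theorem stmt6 (D D₁ D₂ Sin : ℝ)
    (hD : 0 < D) (hD₁ : 0 < D₁) (hD₂ : 0 < D₂) (hSin : 0 < Sin)
    (f₁ f₂ : ℝ → ℝ → ℝ)
    (hf₁0 : ∀ x : ℝ, f₁ 0 x = 0)
    (hmono : StrictMono (fun S => f₁ S 0)) :
    ((∃ S x₁ : ℝ, 0 ≤ S ∧ 0 < x₁ ∧
        D * (Sin - S) - f₁ S 0 * x₁ - f₂ S x₁ * 0 = 0 ∧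
        (f₁ S 0 - D₁) * x₁ = 0 ∧ (f₂ S x₁ - D₂) * 0 = 0) ↔
      (∃ lam : ℝ, 0 ≤ lam ∧ f₁ lam 0 = D₁ ∧ Sin > lam)) ∧
    (∀ S x₁ lam : ℝ, 0 ≤ S → 0 < x₁ →
      D * (Sin - S) - f₁ S 0 * x₁ - f₂ S x₁ * 0 = 0 →
      (f₁ S 0 - D₁) * x₁ = 0 → (f₂ S x₁ - D₂) * 0 = 0 →
      0 ≤ lam → f₁ lam 0 = D₁ →
      S = lam ∧ x₁ = D * (Sin - lam) / D₁) :=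
  stmt6_general D D₁ D₂ Sin hD hD₁ f₁ f₂ hmono
end

section
/- Let P(λ) = λ³ + c₁λ² + c₂λ + c₃ be a cubic real polynomial with c₃ < 0. Then P has at least one root with strictly positive real part. Consequently the coexistence steady state E* of the chemostat system, whose Jacobian has characteristic polynomial with c₃ = −(DGH + D₁FG + D₂EH)x₁*x₂* < 0 (all of D,D₁,D₂,E,F,G,H,x₁*,x₂* positive), is linearly unstable whenever it exists. -/
/-! When `c₃ < 0` the cubic is negative at `0` and tends to `+∞`, so by the intermediate value theorem
it has a positive real root, which is in particular a complex root with positive real part. -/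

open Filter Polynomial

theorem exists_pos_eq_zero_of_tendsto_atTop {f : ℝ → ℝ} (hf : Continuous f) (h0 : f 0 < 0)
    (htop : Tendsto f atTop atTop) : ∃ x, 0 < x ∧ f x = 0 := by
  obtain ⟨b, hfb, hb⟩ := ((htop.eventually_gt_atTop 0).and (eventually_ge_atTop 0)).exists
  obtain ⟨x, ⟨hx, -⟩, hfx⟩ := intermediate_value_Ioo hb hf.continuousOn ⟨h0, hfb⟩
  exact ⟨x, hx, hfx⟩

theorem Polynomial.exists_pos_isRoot_of_eval_zero_neg {p : ℝ[X]} (hdeg : 0 < p.degree)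
    (hlc : 0 ≤ p.leadingCoeff) (h0 : p.eval 0 < 0) : ∃ x, 0 < x ∧ p.IsRoot x :=
  exists_pos_eq_zero_of_tendsto_atTop p.continuous h0
    (tendsto_atTop_of_leadingCoeff_nonneg p hdeg hlc)

theorem exists_pos_cubic_eq_zero {c₁ c₂ c₃ : ℝ} (h : c₃ < 0) :
    ∃ x : ℝ, 0 < x ∧ x ^ 3 + c₁ * x ^ 2 + c₂ * x + c₃ = 0 := by
  set p : ℝ[X] := X ^ 3 + C c₁ * X ^ 2 + C c₂ * X + C c₃
  have hdeg : p.degree = 3 := by simp only [p]; compute_degree!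
  have hmonic : p.Monic := by simp only [p]; monicity!
  obtain ⟨x, hx, hroot⟩ := p.exists_pos_isRoot_of_eval_zero_neg (by rw [hdeg]; norm_num)
    (by rw [hmonic.leadingCoeff]; norm_num) (by simpa [p] using h)
  exact ⟨x, hx, by simpa [p] using hroot⟩

theorem exists_re_pos_cubic_eq_zero {c₁ c₂ c₃ : ℝ} (h : c₃ < 0) :
    ∃ z : ℂ, z ^ 3 + (c₁ : ℂ) * z ^ 2 + (c₂ : ℂ) * z + (c₃ : ℂ) = 0 ∧ 0 < z.re := by
  obtain ⟨x, hx, hroot⟩ := exists_pos_cubic_eq_zero (c₁ := c₁) (c₂ := c₂) h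
  exact ⟨x, by exact_mod_cast hroot, by simpa using hx⟩

/-- A monic real cubic with `c₃ < 0` has a root with strictly positive real part;
consequently the coexistence steady state, whose characteristic polynomial has
`c₃ = −(DGH + D₁FG + D₂EH)x₁*x₂* < 0`, is linearly unstable whenever it exists. -/
theorem stmt9 :
    (∀ c₁ c₂ c₃ : ℝ, c₃ < 0 →
      ∃ z : ℂ, z ^ 3 + (c₁ : ℂ) * z ^ 2 + (c₂ : ℂ) * z + (c₃ : ℂ) = 0 ∧ 0 < z.re) ∧
    (∀ D D₁ D₂ E F G H x₁ x₂ : ℝ,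
      0 < D → 0 < D₁ → 0 < D₂ → 0 < E → 0 < F → 0 < G → 0 < H → 0 < x₁ → 0 < x₂ →
      (-((D * G * H + D₁ * F * G + D₂ * E * H) * x₁ * x₂) < 0 ∧
       ∀ c₁ c₂ : ℝ, ∃ z : ℂ,
         z ^ 3 + (c₁ : ℂ) * z ^ 2 + (c₂ : ℂ) * z +
           ((-((D * G * H + D₁ * F * G + D₂ * E * H) * x₁ * x₂) : ℝ) : ℂ) = 0 ∧
         0 < z.re)) := by
  refine ⟨fun c₁ c₂ c₃ h => exists_re_pos_cubic_eq_zero h,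
    fun D D₁ D₂ E F G H x₁ x₂ hD hD₁ hD₂ hE hF hG hH hx₁ hx₂ => ?_⟩
  have hc₃ : -((D * G * H + D₁ * F * G + D₂ * E * H) * x₁ * x₂) < 0 := by
    rw [neg_lt_zero]; positivity
  exact ⟨hc₃, fun c₁ c₂ => exists_re_pos_cubic_eq_zero hc₃⟩
end

section
/- Assume both boundary steady states E₁ and E₂ of the two-species interspecific density-dependent chemostat exist (i.e., S_in > λᵢ(D) for i = 1,2). Then a positive (coexistence) steady state E* exists if and only if both E₁ and E₂ are locally exponentially stable, i.e., if and only if f₂(λ₁(D), D(S_in−λ₁(D))/D₁) < D₂ and f₁(λ₂(D), D(S_in−λ₂(D))/D₂) < D₁; and when E* exists it is unique. -/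
/-!
Every state obeying the balance law `D (Sin - S) = D₁ x₁ + D₂ x₂` with `S, xᵢ ≥ 0` lies on a
segment from the washout point `(Sin, 0, 0)` to a point with `S = 0`; the segments are indexed
by a direction `θ ∈ [0, 1]`, from the `x₁`-axis (`θ = 0`) to the `x₂`-axis (`θ = 1`). Along each
segment `S` decreases and neither population does, so `fᵢ` decreases strictly from above `Dᵢ`
(as `Sin > λᵢ`) to `0`: the isocline `fᵢ = Dᵢ` crosses it exactly once, at a parameter `rᵢ(θ)`
depending continuously on `θ`. Stability of `E₁` says `r₂(0) < r₁(0)`, stability of `E₂` says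
`r₁(1) < r₂(1)`, and the intermediate value theorem gives a direction where the isoclines meet.
Conversely, at a coexistence state `S > λ₁` and `x₁` is below its value at `E₁`, which forces the
stability inequality. Two coexistence states with `S < S'` would have both populations larger at
`S'`, contradicting the balance law.
-/

open Set Filter Topology Function

section ImplicitRoot

variable {α : Type*} [TopologicalSpace α] {φ : α → ℝ → ℝ} {I : Set α} {a b c : ℝ}

theorem continuousOn_of_isRoot_of_strictAntiOn
    (hφ : ContinuousOn (uncurry φ) (I ×ˢ Icc a b))
    (hanti : ∀ t ∈ I, StrictAntiOn (φ t) (Icc a b)) {g : α → ℝ}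
    (hg : ∀ t ∈ I, g t ∈ Icc a b ∧ φ t (g t) = c) : ContinuousOn g I := by
  intro t₀ ht₀
  obtain ⟨hg₀, hroot₀⟩ := hg t₀ ht₀
  have hφy : ∀ y ∈ Icc a b, ContinuousWithinAt (φ · y) I t₀ := fun y hy =>
    (hφ.comp (continuousOn_id.prodMk continuousOn_const) fun t ht => ⟨ht, hy⟩) t₀ ht₀
  refine tendsto_order.2 ⟨fun y hy => ?_, fun y hy => ?_⟩
  · by_cases hya : y < a
    · filter_upwards [self_mem_nhdsWithin] with t ht using hya.trans_le (hg t ht).1.1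
    have hy' : y ∈ Icc a b := ⟨not_lt.1 hya, hy.le.trans hg₀.2⟩
    have hc : c < φ t₀ y := hroot₀ ▸ hanti t₀ ht₀ hy' hg₀ hy
    filter_upwards [self_mem_nhdsWithin, (hφy y hy').eventually_const_lt hc] with t ht hct
    by_contra! hle
    exact ((hanti t ht).antitoneOn (hg t ht).1 hy' hle).not_gt ((hg t ht).2 ▸ hct)
  · by_cases hyb : b < y
    · filter_upwards [self_mem_nhdsWithin] with t ht using (hg t ht).1.2.trans_lt hyb
    have hy' : y ∈ Icc a b := ⟨hg₀.1.trans hy.le, not_lt.1 hyb⟩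
    have hc : φ t₀ y < c := hroot₀ ▸ hanti t₀ ht₀ hg₀ hy' hy
    filter_upwards [self_mem_nhdsWithin, (hφy y hy').eventually_lt_const hc] with t ht hct
    by_contra! hle
    exact ((hanti t ht).antitoneOn hy' (hg t ht).1 hle).not_gt ((hg t ht).2 ▸ hct)

theorem exists_continuousOn_root_of_strictAntiOn (hab : a ≤ b)
    (hφ : ContinuousOn (uncurry φ) (I ×ˢ Icc a b))
    (hanti : ∀ t ∈ I, StrictAntiOn (φ t) (Icc a b))
    (ha : ∀ t ∈ I, c ≤ φ t a) (hb : ∀ t ∈ I, φ t b ≤ c) :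
    ∃ g : α → ℝ, ContinuousOn g I ∧ ∀ t ∈ I, g t ∈ Icc a b ∧ φ t (g t) = c := by
  have hroot : ∀ t ∈ I, ∃ y ∈ Icc a b, φ t y = c := fun t ht =>
    intermediate_value_Icc' hab
      (hφ.comp (continuousOn_const.prodMk continuousOn_id) fun y hy => ⟨ht, hy⟩)
      ⟨hb t ht, ha t ht⟩
  choose! g hg using hroot
  exact ⟨g, continuousOn_of_isRoot_of_strictAntiOn hφ hanti fun t ht => hg t ht, hg⟩

end ImplicitRoot

structure GrowthMonotone (f : ℝ → ℝ → ℝ) : Prop where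
  strictMonoOn_left : ∀ x, 0 ≤ x → StrictMonoOn (f · x) (Ici 0)
  strictAntiOn_right : ∀ S, 0 < S → StrictAntiOn (f S) (Ici 0)

def IsCoexistenceState (f₁ f₂ : ℝ → ℝ → ℝ) (D D₁ D₂ Sin S x₁ x₂ : ℝ) : Prop :=
  0 < S ∧ 0 < x₁ ∧ 0 < x₂ ∧ D * (Sin - S) = D₁ * x₁ + D₂ * x₂ ∧ f₁ S x₂ = D₁ ∧ f₂ S x₁ = D₂

namespace GrowthMonotone

variable {f : ℝ → ℝ → ℝ}

theorem of_deriv (hc : Continuous (uncurry f))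
    (hS : ∀ S > (0:ℝ), ∀ x ≥ (0:ℝ), 0 < deriv (fun S' => f S' x) S)
    (hx : ∀ S > (0:ℝ), ∀ x ≥ (0:ℝ), deriv (fun x' => f S x') x < 0) : GrowthMonotone f where
  strictMonoOn_left x hx₀ :=
    strictMonoOn_of_deriv_pos (convex_Ici 0)
      (hc.comp (continuous_id.prodMk continuous_const)).continuousOn
      fun S hS' => hS S (by simpa using hS') x hx₀
  strictAntiOn_right S hS₀ :=
    strictAntiOn_of_deriv_neg (convex_Ici 0)
      (hc.comp (continuous_const.prodMk continuous_id)).continuousOn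
      fun x hx' => hx S hS₀ x (le_of_lt (by simpa using hx'))

theorem strictAntiOn_segment (hf : GrowthMonotone f) {Sin α : ℝ} (hSin : 0 < Sin)
    (hα : 0 ≤ α) : StrictAntiOn (fun r => f ((1 - r) * Sin) (r * α)) (Icc 0 1) := by
  intro r hr r' hr' hlt
  have hSr : 0 < (1 - r) * Sin := mul_pos (by linarith [hr'.2]) hSin
  calc f ((1 - r') * Sin) (r' * α) < f ((1 - r) * Sin) (r' * α) :=
        hf.strictMonoOn_left _ (mul_nonneg hr'.1 hα)
          (mul_nonneg (by linarith [hr'.2]) hSin.le) hSr.le (by nlinarith)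
    _ ≤ f ((1 - r) * Sin) (r * α) :=
        (hf.strictAntiOn_right _ hSr).antitoneOn (mul_nonneg hr.1 hα)
          (mul_nonneg hr'.1 hα) (mul_le_mul_of_nonneg_right hlt.le hα)

theorem exists_continuousOn_segment_root (hf : GrowthMonotone f) (hc : Continuous (uncurry f))
    (h0 : ∀ x ≥ (0:ℝ), f 0 x = 0) {lam Sin Dv : ℝ} (hlam : 0 ≤ lam) (hSin : lam < Sin)
    (hbe : f lam 0 = Dv) {I : Set ℝ} {α : ℝ → ℝ} (hα : ContinuousOn α I)
    (hα₀ : ∀ θ ∈ I, 0 ≤ α θ) :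
    ∃ r : ℝ → ℝ, ContinuousOn r I ∧
      ∀ θ ∈ I, r θ ∈ Icc 0 1 ∧ f ((1 - r θ) * Sin) (r θ * α θ) = Dv := by
  have hSin₀ : 0 < Sin := hlam.trans_lt hSin
  have hmono₀ := hf.strictMonoOn_left 0 le_rfl
  have hDv : 0 ≤ Dv := calc
    (0:ℝ) = f 0 0 := (h0 0 le_rfl).symm
    _ ≤ Dv := hbe ▸ hmono₀.monotoneOn self_mem_Ici hlam hlam
  refine exists_continuousOn_root_of_strictAntiOn zero_le_one ?_
    (fun θ hθ => hf.strictAntiOn_segment hSin₀ (hα₀ θ hθ)) (fun θ _ => ?_) (fun θ hθ => ?_)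
  · exact hc.comp_continuousOn
      ((((continuous_const.sub continuous_snd).mul continuous_const).continuousOn).prodMk
        (continuousOn_snd.mul (hα.comp continuousOn_fst fun p hp => hp.1)))
  · simpa [← hbe] using (hmono₀.monotoneOn hlam hSin₀.le hSin.le)
  · simpa [h0 _ (hα₀ θ hθ)] using hDv

theorem segment_root_mem_Ioo (hf : GrowthMonotone f) (h0 : ∀ x ≥ (0:ℝ), f 0 x = 0)
    {lam Sin Dv α r : ℝ} (hlam : 0 ≤ lam) (hSin : lam < Sin) (hbe : f lam 0 = Dv)
    (hDv : 0 < Dv) (hα : 0 ≤ α) (hr : r ∈ Icc 0 1) (he : f ((1 - r) * Sin) (r * α) = Dv) :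
    r ∈ Ioo 0 1 := by
  refine ⟨hr.1.lt_of_ne' fun hr₀ => hSin.ne' ?_, hr.2.lt_of_ne fun hr₁ => hDv.ne ?_⟩
  · rw [hr₀, sub_zero, one_mul, zero_mul] at he
    exact (hf.strictMonoOn_left 0 le_rfl).injOn (hlam.trans hSin.le) hlam (he.trans hbe.symm)
  · rw [hr₁, sub_self, zero_mul, one_mul, h0 α hα] at he
    exact he

end GrowthMonotone

theorem segment_root_lt_of_stable {f g : ℝ → ℝ → ℝ} (hf : GrowthMonotone f)
    (hg : GrowthMonotone g) {D Df Dg Sin lam r s : ℝ} (hD : 0 ≤ D) (hDf : 0 < Df)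
    (hSin : 0 < Sin) (hlam : 0 ≤ lam) (hbe : f lam 0 = Df)
    (hstab : g lam (D * (Sin - lam) / Df) < Dg) (hr : r ∈ Icc 0 1) (hs : s ∈ Icc 0 1)
    (hfr : f ((1 - r) * Sin) 0 = Df) (hgs : g ((1 - s) * Sin) (s * (D * Sin / Df)) = Dg) :
    s < r := by
  have hSr : (1 - r) * Sin = lam :=
    (hf.strictMonoOn_left 0 le_rfl).injOn (mul_nonneg (by linarith [hr.2]) hSin.le) hlam
      (hfr.trans hbe.symm)
  have hxr : r * (D * Sin / Df) = D * (Sin - lam) / Df := by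
    rw [← hSr]; ring
  have hanti := hg.strictAntiOn_segment (α := D * Sin / Df) hSin (by positivity)
  refine (hanti.lt_iff_gt hr hs).1 ?_
  rw [hSr, hxr, hgs]
  exact hstab

namespace IsCoexistenceState

variable {f₁ f₂ : ℝ → ℝ → ℝ} {D D₁ D₂ Sin S x₁ x₂ S' x₁' x₂' : ℝ}

theorem swap (h : IsCoexistenceState f₁ f₂ D D₁ D₂ Sin S x₁ x₂) :
    IsCoexistenceState f₂ f₁ D D₂ D₁ Sin S x₂ x₁ := by
  obtain ⟨hS, hx₁, hx₂, hbal, he₁, he₂⟩ := h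
  exact ⟨hS, hx₂, hx₁, by linarith, he₂, he₁⟩

theorem stable (hf₁ : GrowthMonotone f₁) (hf₂ : GrowthMonotone f₂)
    (h : IsCoexistenceState f₁ f₂ D D₁ D₂ Sin S x₁ x₂) (hD : 0 < D) (hD₁ : 0 < D₁)
    (hD₂ : 0 ≤ D₂) {lam : ℝ} (hlam : 0 < lam) (hbe : f₁ lam 0 = D₁) :
    f₂ lam (D * (Sin - lam) / D₁) < D₂ := by
  obtain ⟨hS, hx₁, hx₂, hbal, he₁, he₂⟩ := h
  have hlamS : lam < S := by
    refine ((hf₁.strictMonoOn_left 0 le_rfl).lt_iff_lt hlam.le hS.le).1 ?_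
    rw [hbe, ← he₁]
    exact hf₁.strictAntiOn_right S hS self_mem_Ici hx₂.le hx₂
  have hx₁lt : x₁ < D * (Sin - lam) / D₁ := by
    rw [lt_div_iff₀ hD₁]
    nlinarith
  calc f₂ lam (D * (Sin - lam) / D₁) < f₂ lam x₁ :=
        hf₂.strictAntiOn_right lam hlam hx₁.le (hx₁.le.trans hx₁lt.le) hx₁lt
    _ < f₂ S x₁ := hf₂.strictMonoOn_left x₁ hx₁.le hlam.le hS.le hlamS
    _ = D₂ := he₂

theorem substrate_le (hf₁ : GrowthMonotone f₁) (hf₂ : GrowthMonotone f₂) (hD : 0 ≤ D)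
    (hD₁ : 0 < D₁) (hD₂ : 0 < D₂) (h : IsCoexistenceState f₁ f₂ D D₁ D₂ Sin S x₁ x₂)
    (h' : IsCoexistenceState f₁ f₂ D D₁ D₂ Sin S' x₁' x₂') : S ≤ S' := by
  obtain ⟨hS, hx₁, hx₂, hbal, he₁, he₂⟩ := h
  obtain ⟨hS', hx₁', hx₂', hbal', he₁', he₂'⟩ := h'
  by_contra! hlt
  have hx₁lt : x₁' < x₁ := by
    refine ((hf₂.strictAntiOn_right S hS).lt_iff_gt hx₁.le hx₁'.le).1 ?_
    rw [he₂, ← he₂']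
    exact hf₂.strictMonoOn_left x₁' hx₁'.le hS'.le hS.le hlt
  have hx₂lt : x₂' < x₂ := by
    refine ((hf₁.strictAntiOn_right S hS).lt_iff_gt hx₂.le hx₂'.le).1 ?_
    rw [he₁, ← he₁']
    exact hf₁.strictMonoOn_left x₂' hx₂'.le hS'.le hS.le hlt
  nlinarith

theorem unique (hf₁ : GrowthMonotone f₁) (hf₂ : GrowthMonotone f₂) (hD : 0 ≤ D)
    (hD₁ : 0 < D₁) (hD₂ : 0 < D₂) (h : IsCoexistenceState f₁ f₂ D D₁ D₂ Sin S x₁ x₂)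
    (h' : IsCoexistenceState f₁ f₂ D D₁ D₂ Sin S' x₁' x₂') : S = S' ∧ x₁ = x₁' ∧ x₂ = x₂' := by
  obtain rfl : S = S' :=
    (h.substrate_le hf₁ hf₂ hD hD₁ hD₂ h').antisymm (h'.substrate_le hf₁ hf₂ hD hD₁ hD₂ h)
  obtain ⟨hS, hx₁, hx₂, -, he₁, he₂⟩ := h
  obtain ⟨-, hx₁', hx₂', -, he₁', he₂'⟩ := h'
  exact ⟨rfl, (hf₂.strictAntiOn_right S hS).injOn hx₁.le hx₁'.le (he₂.trans he₂'.symm),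
    (hf₁.strictAntiOn_right S hS).injOn hx₂.le hx₂'.le (he₁.trans he₁'.symm)⟩

theorem of_segment (hD : 0 < D) (hD₁ : 0 < D₁) (hD₂ : 0 < D₂) (hSin : 0 < Sin) {θ r : ℝ}
    (hθ : θ ∈ Ioo 0 1) (hr : r ∈ Ioo 0 1)
    (he₁ : f₁ ((1 - r) * Sin) (r * (θ * (D * Sin / D₂))) = D₁)
    (he₂ : f₂ ((1 - r) * Sin) (r * ((1 - θ) * (D * Sin / D₁))) = D₂) :
    IsCoexistenceState f₁ f₂ D D₁ D₂ Sin
      ((1 - r) * Sin) (r * ((1 - θ) * (D * Sin / D₁))) (r * (θ * (D * Sin / D₂))) := by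
  have := hθ.1; have := hr.1; have := sub_pos.2 hθ.2; have := sub_pos.2 hr.2
  refine ⟨by positivity, by positivity, by positivity, ?_, he₁, he₂⟩
  field_simp
  ring

end IsCoexistenceState

theorem exists_isCoexistenceState {f₁ f₂ : ℝ → ℝ → ℝ} (hf₁ : GrowthMonotone f₁)
    (hf₂ : GrowthMonotone f₂) (hc₁ : Continuous (uncurry f₁)) (hc₂ : Continuous (uncurry f₂))
    (h0₁ : ∀ x ≥ (0:ℝ), f₁ 0 x = 0) (h0₂ : ∀ x ≥ (0:ℝ), f₂ 0 x = 0)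
    {D D₁ D₂ Sin lam₁ lam₂ : ℝ} (hD : 0 < D) (hD₁ : 0 < D₁) (hD₂ : 0 < D₂)
    (hlam₁ : 0 ≤ lam₁) (hlam₂ : 0 ≤ lam₂) (hbe₁ : f₁ lam₁ 0 = D₁) (hbe₂ : f₂ lam₂ 0 = D₂)
    (hSin₁ : lam₁ < Sin) (hSin₂ : lam₂ < Sin)
    (hstab₁ : f₂ lam₁ (D * (Sin - lam₁) / D₁) < D₂)
    (hstab₂ : f₁ lam₂ (D * (Sin - lam₂) / D₂) < D₁) :
    ∃ S x₁ x₂, IsCoexistenceState f₁ f₂ D D₁ D₂ Sin S x₁ x₂ := by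
  have hSin : 0 < Sin := hlam₁.trans_lt hSin₁
  obtain ⟨r₁, hr₁c, hr₁⟩ := hf₁.exists_continuousOn_segment_root hc₁ h0₁ hlam₁ hSin₁ hbe₁
    (α := fun θ => θ * (D * Sin / D₂)) (I := Icc 0 1) (by fun_prop)
    (fun θ hθ => mul_nonneg hθ.1 (by positivity))
  obtain ⟨r₂, hr₂c, hr₂⟩ := hf₂.exists_continuousOn_segment_root hc₂ h0₂ hlam₂ hSin₂ hbe₂
    (α := fun θ => (1 - θ) * (D * Sin / D₁)) (I := Icc 0 1) (by fun_prop)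
    (fun θ hθ => mul_nonneg (sub_nonneg.2 hθ.2) (by positivity))
  have h0 : (0:ℝ) ∈ Icc 0 1 := left_mem_Icc.2 zero_le_one
  have h1 : (1:ℝ) ∈ Icc 0 1 := right_mem_Icc.2 zero_le_one
  have hlt₀ : r₂ 0 < r₁ 0 :=
    segment_root_lt_of_stable hf₁ hf₂ hD.le hD₁ hSin hlam₁ hbe₁ hstab₁ (hr₁ 0 h0).1
      (hr₂ 0 h0).1 (by simpa using (hr₁ 0 h0).2) (by simpa using (hr₂ 0 h0).2)
  have hlt₁ : r₁ 1 < r₂ 1 :=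
    segment_root_lt_of_stable hf₂ hf₁ hD.le hD₂ hSin hlam₂ hbe₂ hstab₂ (hr₂ 1 h1).1
      (hr₁ 1 h1).1 (by simpa using (hr₂ 1 h1).2) (by simpa using (hr₁ 1 h1).2)
  obtain ⟨θ, hθ, hθr⟩ : ∃ θ ∈ Icc (0:ℝ) 1, r₁ θ - r₂ θ = 0 :=
    intermediate_value_Icc' zero_le_one (hr₁c.sub hr₂c)
      ⟨by simp only [Pi.sub_apply]; linarith, by simp only [Pi.sub_apply]; linarith⟩
  have hθ' : θ ∈ Ioo 0 1 :=
    ⟨hθ.1.lt_of_ne' (by rintro rfl; linarith), hθ.2.lt_of_ne (by rintro rfl; linarith)⟩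
  obtain ⟨hr, he₁⟩ := hr₁ θ hθ
  rw [show r₁ θ = r₂ θ by linarith] at hr he₁
  have hr' := hf₁.segment_root_mem_Ioo h0₁ hlam₁ hSin₁ hbe₁ hD₁
    (mul_nonneg hθ.1 (by positivity)) hr he₁
  exact ⟨_, _, _, .of_segment hD hD₁ hD₂ hSin hθ' hr' he₁ (hr₂ θ hθ).2⟩

/-- A positive (coexistence) steady state `E*` exists iff both boundary steady states
`E₁`, `E₂` are locally exponentially stable, i.e. iff
`f₂(λ₁, D(S_in−λ₁)/D₁) < D₂` and `f₁(λ₂, D(S_in−λ₂)/D₂) < D₁`; it is unique. -/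
theorem stmt13 (f₁ f₂ : ℝ → ℝ → ℝ)
    (hC₁ : ContDiff ℝ 1 (fun p : ℝ × ℝ => f₁ p.1 p.2))
    (hC₂ : ContDiff ℝ 1 (fun p : ℝ × ℝ => f₂ p.1 p.2))
    (hf₁0 : ∀ x ≥ (0:ℝ), f₁ 0 x = 0) (hf₂0 : ∀ x ≥ (0:ℝ), f₂ 0 x = 0)
    (hf₁S : ∀ S > (0:ℝ), ∀ x ≥ (0:ℝ), 0 < deriv (fun S' => f₁ S' x) S)
    (hf₂S : ∀ S > (0:ℝ), ∀ x ≥ (0:ℝ), 0 < deriv (fun S' => f₂ S' x) S)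
    (hf₁x : ∀ S > (0:ℝ), ∀ x ≥ (0:ℝ), deriv (fun x' => f₁ S x') x < 0)
    (hf₂x : ∀ S > (0:ℝ), ∀ x ≥ (0:ℝ), deriv (fun x' => f₂ S x') x < 0)
    (D D₁ D₂ Sin lam₁ lam₂ : ℝ)
    (hD : 0 < D) (hD₁ : 0 < D₁) (hD₂ : 0 < D₂)
    (hlam₁ : 0 < lam₁) (hlam₂ : 0 < lam₂)
    (hbe₁ : f₁ lam₁ 0 = D₁) (hbe₂ : f₂ lam₂ 0 = D₂)
    (hSin₁ : Sin > lam₁) (hSin₂ : Sin > lam₂) :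
    ((∃ S x₁ x₂ : ℝ, 0 < S ∧ 0 < x₁ ∧ 0 < x₂ ∧
        D * (Sin - S) = D₁ * x₁ + D₂ * x₂ ∧ f₁ S x₂ = D₁ ∧ f₂ S x₁ = D₂) ↔
      (f₂ lam₁ (D * (Sin - lam₁) / D₁) < D₂ ∧ f₁ lam₂ (D * (Sin - lam₂) / D₂) < D₁)) ∧
    (∀ S x₁ x₂ S' x₁' x₂' : ℝ,
      0 < S → 0 < x₁ → 0 < x₂ →
      D * (Sin - S) = D₁ * x₁ + D₂ * x₂ → f₁ S x₂ = D₁ → f₂ S x₁ = D₂ →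
      0 < S' → 0 < x₁' → 0 < x₂' →
      D * (Sin - S') = D₁ * x₁' + D₂ * x₂' → f₁ S' x₂' = D₁ → f₂ S' x₁' = D₂ →
      S = S' ∧ x₁ = x₁' ∧ x₂ = x₂') := by
  have hf₁ := GrowthMonotone.of_deriv hC₁.continuous hf₁S hf₁x
  have hf₂ := GrowthMonotone.of_deriv hC₂.continuous hf₂S hf₂x
  refine ⟨⟨fun ⟨S, x₁, x₂, h⟩ => ?_, fun ⟨hstab₁, hstab₂⟩ => ?_⟩, ?_⟩
  · have h : IsCoexistenceState f₁ f₂ D D₁ D₂ Sin S x₁ x₂ := h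
    exact ⟨h.stable hf₁ hf₂ hD hD₁ hD₂.le hlam₁ hbe₁,
      h.swap.stable hf₂ hf₁ hD hD₂ hD₁.le hlam₂ hbe₂⟩
  · exact exists_isCoexistenceState hf₁ hf₂ hC₁.continuous hC₂.continuous hf₁0 hf₂0 hD hD₁ hD₂
      hlam₁.le hlam₂.le hbe₁ hbe₂ hSin₁ hSin₂ hstab₁ hstab₂
  · intro S x₁ x₂ S' x₁' x₂' hS hx₁ hx₂ hbal he₁ he₂ hS' hx₁' hx₂' hbal' he₁' he₂'
    exact IsCoexistenceState.unique hf₁ hf₂ hD.le hD₁ hD₂ ⟨hS, hx₁, hx₂, hbal, he₁, he₂⟩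
      ⟨hS', hx₁', hx₂', hbal', he₁', he₂'⟩
end
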